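/- A 2-step memory scheme separates the hypotheses (non-adaptive adversary): With W and W̄(·|·,0), W̄(·|·,1) as in the erasure example and the transmitter input pair distributed as P_{X_1X_2}(0,0) = P_{X_1X_2}(1,1) = 1/2, let Q_{Y_1Y_2}(y_1,y_2) := Σ_{x} (1/2) W(y_1|x) W(y_2|x) be the double-letter output distribution under H0. Then for p ∈ (0,1), r ∈ (0,1), there is NO joint state distribution P_{S̄_1S̄_2} on {0,1}² such that the induced double-letter output distribution under H1, Q̄_{Y_1Y_2}(y_1,y_2) := Σ_{x,s̄_1,s̄_2} (1/2)·[x ∈ {(0,0),(1,1) inputs}]·P_{S̄_1S̄_2}(s̄_1,s̄_2) W̄(y_1|x,s̄_1) W̄(y_2|x,s̄_2), equals Q_{Y_1Y_2}. Specifically, matching the Y_1-marginal forces P_{S̄_1} to be uniform, and then Q_{Y_1Y_2}(0,1) = 0 while Q̄_{Y_1Y_2}(0,1) > 0. -/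

import Mathlib

/-!
Every row of `W̄` sums to one, so the `Y₁`-marginal of `Q̄` sees only the law of `S̄₁`; at
output `0` it equals `(1-p)/2 · (1 + r (1 - 2 P_{S̄₁}(0)))`, so matching `Q` forces
`P_{S̄₁}(0) = 1/2`. Under `H0` the pair `(0,1)` is impossible since both letters carry the same
input, whereas under `H1` state `1` in the first slot lets input `1` produce `0` and then `1`,
so `Q̄(0,1) > 0` as soon as `P_{S̄₁}(1) > 0`.
-/

open Finset

/-- `p` is a probability mass function. -/
def IsDist {Z : Type*} [Fintype Z] (p : Z → ℝ) : Prop :=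
  (∀ z, 0 ≤ p z) ∧ ∑ z, p z = 1

/-- The output alphabet `{0, 1, e}` of the erasure example. -/
inductive Out : Type
  | o0 | o1 | oe
deriving DecidableEq

instance : Fintype Out where
  elems := {Out.o0, Out.o1, Out.oe}
  complete := by intro x; cases x <;> simp

/-- The binary erasure channel `BEC(p)`: `W(x|x) = 1-p`, `W(e|x) = p`
(inputs `false = 0`, `true = 1`). -/
noncomputable def Wbec (p : ℝ) : Bool → Out → ℝ :=
  fun x y =>
    match x, y with
    | false, Out.o0 => 1 - p
    | false, Out.o1 => 0
    | false, Out.oe => p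
    | true,  Out.o0 => 0
    | true,  Out.o1 => 1 - p
    | true,  Out.oe => p

/-- The state-dependent channel `W̄(·|·,s̄)` of the erasure example (states
`false = 0`, `true = 1`): `W̄(·|·,0)` transmits input `1` cleanly (up to erasure) and
flips input `0` to `1` with probability `(1-p)r`; `W̄(·|·,1)` is symmetric. -/
noncomputable def WbarEx (p r : ℝ) : Bool → Bool → Out → ℝ :=
  fun x s y =>
    match x, s, y with
    | false, false, Out.o0 => (1 - p) * (1 - r)
    | false, false, Out.o1 => (1 - p) * r
    | false, false, Out.oe => p
    | true,  false, Out.o0 => 0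
    | true,  false, Out.o1 => 1 - p
    | true,  false, Out.oe => p
    | false, true,  Out.o0 => 1 - p
    | false, true,  Out.o1 => 0
    | false, true,  Out.oe => p
    | true,  true,  Out.o0 => (1 - p) * r
    | true,  true,  Out.o1 => (1 - p) * (1 - r)
    | true,  true,  Out.oe => p

/-- The double-letter output distribution under `H0` when the transmitter sends the pair
`(X₁,X₂)` with `P(0,0) = P(1,1) = 1/2`. -/
noncomputable def Q2 (p : ℝ) (y : Out × Out) : ℝ :=
  ∑ x : Bool, (1/2 : ℝ) * Wbec p x y.1 * Wbec p x y.2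

/-- The double-letter output distribution under `H1` when the (non-adaptive) adversary
chooses the state pair `(S̄₁,S̄₂)` according to `P`, independently of the inputs. -/
noncomputable def Qbar2 (p r : ℝ) (P : Bool × Bool → ℝ) (y : Out × Out) : ℝ :=
  ∑ x : Bool, (1/2 : ℝ) *
    ∑ s : Bool × Bool, P s * WbarEx p r x s.1 y.1 * WbarEx p r x s.2 y.2

theorem Out.sum_eq {M : Type*} [AddCommMonoid M] (f : Out → M) :
    ∑ y, f y = f Out.o0 + f Out.o1 + f Out.oe := by
  rw [show (univ : Finset Out) = {Out.o0, Out.o1, Out.oe} from rfl,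
    sum_insert (by decide), sum_pair (by decide), add_assoc]

theorem sum_WbarEx (p r : ℝ) (x s : Bool) : ∑ y, WbarEx p r x s y = 1 := by
  cases x <;> cases s <;> simp only [Out.sum_eq, WbarEx] <;> ring

theorem Q2_o0_o1 (p : ℝ) : Q2 p (Out.o0, Out.o1) = 0 := by
  simp only [Q2, Fintype.sum_bool, Wbec]; ring

theorem sum_Q2_o0 (p : ℝ) : ∑ y₂, Q2 p (Out.o0, y₂) = (1 - p) / 2 := by
  simp only [Q2, Out.sum_eq, Fintype.sum_bool, Wbec]; ring

theorem sum_false_add_sum_true {P : Bool × Bool → ℝ} (hP : ∑ s, P s = 1) :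
    ∑ s₂, P (false, s₂) + ∑ s₂, P (true, s₂) = 1 := by
  rw [← hP, Fintype.sum_prod_type, Fintype.sum_bool fun s₁ => ∑ s₂, P (s₁, s₂), add_comm]

theorem sum_Qbar2_eq_marginal (p r : ℝ) (P : Bool × Bool → ℝ) (y₁ : Out) :
    ∑ y₂, Qbar2 p r P (y₁, y₂) = ∑ x, 1 / 2 * ∑ s, P s * WbarEx p r x s.1 y₁ := by
  simp only [Qbar2]
  rw [sum_comm]
  refine sum_congr rfl fun x _ => ?_
  rw [← mul_sum, sum_comm]
  congr 1
  refine sum_congr rfl fun s _ => ?_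
  rw [← mul_sum, sum_WbarEx, mul_one]

theorem sum_Qbar2_o0 (p r : ℝ) (P : Bool × Bool → ℝ) :
    ∑ y₂, Qbar2 p r P (Out.o0, y₂) =
      (1 - p) / 2 * ((1 - r) * ∑ s₂, P (false, s₂) + (1 + r) * ∑ s₂, P (true, s₂)) := by
  simp only [sum_Qbar2_eq_marginal, Fintype.sum_prod_type, Fintype.sum_bool, WbarEx]
  ring

theorem Qbar2_o0_o1 (p r : ℝ) (P : Bool × Bool → ℝ) :
    Qbar2 p r P (Out.o0, Out.o1) = (1 - p) ^ 2 * r / 2 *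
      ((1 - r) * P (false, false) + 2 * P (true, false) + (1 - r) * P (true, true)) := by
  simp only [Qbar2, Fintype.sum_prod_type, Fintype.sum_bool, WbarEx]
  ring

theorem sum_fst_state_eq_half_of_marginal_eq {p r : ℝ} (hp : p < 1) (hr : r ≠ 0)
    {P : Bool × Bool → ℝ} (hP : IsDist P)
    (h : ∑ y₂, Qbar2 p r P (Out.o0, y₂) = ∑ y₂, Q2 p (Out.o0, y₂)) :
    ∑ s₂, P (false, s₂) = 1 / 2 := by
  have htotal := sum_false_add_sum_true hP.2
  rw [sum_Qbar2_o0, sum_Q2_o0] at h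
  have hzero : (1 - p) * r * (1 - 2 * ∑ s₂, P (false, s₂)) = 0 := by
    linear_combination 2 * h - (1 - p) * (1 + r) * htotal
  have hfactor : (1 - p) * r ≠ 0 := mul_ne_zero (by linarith) hr
  linarith [(mul_eq_zero.mp hzero).resolve_left hfactor]

theorem Qbar2_o0_o1_pos {p r : ℝ} (hp : p < 1) (hr : r ∈ Set.Ioo (0 : ℝ) 1)
    {P : Bool × Bool → ℝ} (hP : ∀ s, 0 ≤ P s) (hsnd : 0 < ∑ s₂, P (true, s₂)) :
    0 < Qbar2 p r P (Out.o0, Out.o1) := by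
  rw [Fintype.sum_bool] at hsnd
  have h1r : 0 < 1 - r := by linarith [hr.2]
  have hbracket : 0 < (1 - r) * P (false, false) + 2 * P (true, false)
      + (1 - r) * P (true, true) := by
    nlinarith [mul_nonneg h1r.le (hP (false, false)), mul_nonneg hr.1.le (hP (true, false)),
      mul_pos h1r hsnd, hP (true, false)]
  have h1p : 0 < 1 - p := by linarith
  rw [Qbar2_o0_o1]
  exact mul_pos (by have := hr.1; positivity) hbracket

/-- A 2-step memory scheme separates the hypotheses (non-adaptive adversary): no joint
state distribution `P_{S̄₁S̄₂}` makes the double-letter output distribution under `H1`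
equal to the one under `H0`; specifically, matching the `Y₁`-marginal forces `P_{S̄₁}` to
be uniform, and then `Q(0,1) = 0` while `Q̄(0,1) > 0`. -/
theorem two_step_memory_separates
    (p r : ℝ) (hp : p ∈ Set.Ioo (0:ℝ) 1) (hr : r ∈ Set.Ioo (0:ℝ) 1) :
    (∀ P : Bool × Bool → ℝ, IsDist P → Qbar2 p r P ≠ Q2 p) ∧
    Q2 p (Out.o0, Out.o1) = 0 ∧
    (∀ P : Bool × Bool → ℝ, IsDist P →
      (∀ y1 : Out, (∑ y2, Qbar2 p r P (y1, y2)) = ∑ y2, Q2 p (y1, y2)) →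
        (∑ s2, P (false, s2)) = 1/2 ∧ 0 < Qbar2 p r P (Out.o0, Out.o1)) := by
  have marginal_forces : ∀ P : Bool × Bool → ℝ, IsDist P →
      (∀ y1 : Out, (∑ y2, Qbar2 p r P (y1, y2)) = ∑ y2, Q2 p (y1, y2)) →
        (∑ s2, P (false, s2)) = 1/2 ∧ 0 < Qbar2 p r P (Out.o0, Out.o1) := by
    intro P hP h
    have hfst := sum_fst_state_eq_half_of_marginal_eq hp.2 hr.1.ne' hP (h Out.o0)
    have hsnd : ∑ s₂, P (true, s₂) = 1 / 2 := by
      linarith [sum_false_add_sum_true hP.2]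
    exact ⟨hfst, Qbar2_o0_o1_pos hp.2 hr hP.1 (by rw [hsnd]; norm_num)⟩
  refine ⟨fun P hP heq => ?_, Q2_o0_o1 p, marginal_forces⟩
  have hpos := (marginal_forces P hP fun y₁ => by rw [heq]).2
  rw [heq, Q2_o0_o1] at hpos
  exact lt_irrefl 0 hpos
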